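/- Let a ∈ (0,1) and let β₁, β₂ ∈ [−a/√(1−a²), a/√(1−a²)] with β₂ ≠ 0. If F₁(β₁) + F₁(β₂) = −πβ₂/√(1+β₂²), then β₁² > β₂². -/

import Mathlib

/-!
`F₁ a` is odd, and strictly increasing on `[-a/√(1-a²), a/√(1-a²)]`: with
`θ = arcsin √((1-a²)(1+β²)) ∈ (0, π/2)` its derivative is `(tan θ - θ) / (1+β²)^{3/2} > 0`.
By oddness the hypothesis reads `F₁(β₁) = F₁(-β₂) - π β₂ / √(1+β₂²)`, and the correction term
has the sign opposite to `β₂`, so monotonicity puts `β₁` strictly beyond `-β₂`, away from `0`.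
-/

open Real Set

/-- The argument function `F₁(β)` in the short-time case. -/
noncomputable def F₁ (a β : ℝ) : ℝ :=
  -(β / Real.sqrt (1 + β^2)) * Real.arcsin (Real.sqrt ((1 - a^2) * (1 + β^2))) +
    Real.arcsin (β * Real.sqrt (1 - a^2) / a)

theorem F₁_neg (a β : ℝ) : F₁ a (-β) = -F₁ a β := by
  simp only [F₁, neg_sq, neg_div, neg_mul, neg_neg, arcsin_neg]
  ring

theorem continuous_F₁ (a : ℝ) : Continuous (F₁ a) := by
  unfold F₁
  fun_prop (disch := intro; positivity)

theorem hasDerivAt_div_sqrt_one_add_sq (x : ℝ) :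
    HasDerivAt (fun y => y / √(1 + y ^ 2)) (1 / √(1 + x ^ 2) ^ 3) x := by
  have hu : 0 < √(1 + x ^ 2) := by positivity
  have hu2 : √(1 + x ^ 2) ^ 2 = 1 + x ^ 2 := sq_sqrt (by positivity)
  have hsqrt := ((hasDerivAt_pow 2 x).const_add 1).sqrt (by positivity)
  refine ((hasDerivAt_id' x).div hsqrt hu.ne').congr_deriv ?_
  field_simp
  linear_combination 2 * hu2

theorem hasDerivAt_F₁ {a x : ℝ} (ha₀ : 0 < a) (ha₁ : a < 1)
    (hx : (1 - a ^ 2) * (1 + x ^ 2) < 1) :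
    HasDerivAt (F₁ a)
      ((tan (arcsin √((1 - a ^ 2) * (1 + x ^ 2))) - arcsin √((1 - a ^ 2) * (1 + x ^ 2))) /
        √(1 + x ^ 2) ^ 3) x := by
  set s := √(1 - a ^ 2)
  set u := √(1 + x ^ 2)
  set t := √((1 - a ^ 2) * (1 + x ^ 2))
  set w := √(1 - t ^ 2)
  have hq : 0 < (1 - a ^ 2) * (1 + x ^ 2) := mul_pos (by nlinarith) (by positivity)
  have hs2 : s ^ 2 = 1 - a ^ 2 := sq_sqrt (by nlinarith)
  have hu2 : u ^ 2 = 1 + x ^ 2 := sq_sqrt (by positivity)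
  have ht2 : t ^ 2 = (1 - a ^ 2) * (1 + x ^ 2) := sq_sqrt hq.le
  have hts : t = s * u := sqrt_mul (by nlinarith) _
  have hu : 0 < u := by positivity
  have ht : 0 < t := sqrt_pos.2 hq
  have ht1 : t < 1 := (sqrt_lt' one_pos).2 (by simpa using hx)
  have hw : 0 < w := sqrt_pos.2 (by nlinarith)
  have hw2 : w ^ 2 = 1 - t ^ 2 := sq_sqrt (by nlinarith)
  have hxsa : (x * s / a) ^ 2 < 1 := by
    rw [div_pow, div_lt_one (by positivity)]; nlinarith
  have hxsa_w : √(1 - (x * s / a) ^ 2) = w / a := by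
    rw [← sqrt_sq (div_pos hw ha₀).le]
    congr 1
    field_simp
    linear_combination (-1) * hw2 + ht2 - x ^ 2 * hs2
  have hT : HasDerivAt (fun y => √((1 - a ^ 2) * (1 + y ^ 2)))
      ((1 - a ^ 2) * (2 * x) / (2 * t)) x := by
    simpa using (((hasDerivAt_pow 2 x).const_add 1).const_mul (1 - a ^ 2)).sqrt hq.ne'
  have h₁ := (hasDerivAt_arcsin (x := t) (by linarith) ht1.ne).comp x hT
  have h₂ := (hasDerivAt_arcsin (x := x * s / a) (by nlinarith) (by nlinarith)).comp x
    (((hasDerivAt_id' x).mul_const s).div_const a)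
  have hF : F₁ a = -((fun y => y / √(1 + y ^ 2)) *
      (arcsin ∘ fun y => √((1 - a ^ 2) * (1 + y ^ 2)))) + arcsin ∘ fun y => y * s / a := by
    ext y
    simp only [F₁, Pi.add_apply, Pi.neg_apply, Pi.mul_apply, Function.comp_apply, neg_mul]
    rfl
  rw [hF]
  refine (((hasDerivAt_div_sqrt_one_add_sq x).mul h₁).neg.add h₂).congr_deriv ?_
  rw [tan_arcsin, hxsa_w]
  change -(1 / u ^ 3 * arcsin t + x / u * (1 / w * ((1 - a ^ 2) * (2 * x) / (2 * t)))) +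
    1 / (w / a) * (1 * s / a) = (t / w - arcsin t) / u ^ 3
  rw [← hs2, hts]
  field_simp
  linear_combination u * s * hu2

theorem strictMonoOn_F₁ {a : ℝ} (ha₀ : 0 < a) (ha₁ : a < 1) :
    StrictMonoOn (F₁ a) (Icc (-(a / √(1 - a ^ 2))) (a / √(1 - a ^ 2))) := by
  have hs : 0 < √(1 - a ^ 2) := sqrt_pos.2 (by nlinarith)
  have hs2 : √(1 - a ^ 2) ^ 2 = 1 - a ^ 2 := sq_sqrt (by nlinarith)
  refine strictMonoOn_of_deriv_pos (convex_Icc _ _) (continuous_F₁ a).continuousOn fun x hx => ?_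
  rw [interior_Icc, mem_Ioo, ← abs_lt, lt_div_iff₀ hs] at hx
  have hx' : (1 - a ^ 2) * (1 + x ^ 2) < 1 := by
    have := sq_lt_sq' (by linarith [abs_nonneg x, mul_nonneg (abs_nonneg x) hs.le]) hx
    rw [mul_pow, sq_abs, hs2] at this
    linarith
  have hq : 0 < (1 - a ^ 2) * (1 + x ^ 2) := mul_pos (by nlinarith) (by positivity)
  have ht : 0 < √((1 - a ^ 2) * (1 + x ^ 2)) := sqrt_pos.2 hq
  have ht1 : √((1 - a ^ 2) * (1 + x ^ 2)) < 1 := (sqrt_lt' one_pos).2 (by simpa using hx')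
  rw [(hasDerivAt_F₁ ha₀ ha₁ hx').deriv]
  exact div_pos (sub_pos.2 (lt_tan (arcsin_pos.2 ht) (arcsin_lt_pi_div_two.2 ht1))) (by positivity)

theorem sq_lt_sq_of_strictMonoOn_of_eq_sub_mul {f : ℝ → ℝ} {c k x y : ℝ}
    (hf : StrictMonoOn f (Icc (-c) c)) (hx : x ∈ Icc (-c) c) (hy : y ∈ Icc (-c) c)
    (hk : 0 < k) (hy₀ : y ≠ 0) (h : f x = f (-y) - k * y) : y ^ 2 < x ^ 2 := by
  have hy' : -y ∈ Icc (-c) c := ⟨neg_le_neg hy.2, neg_le.1 hy.1⟩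
  rcases hy₀.lt_or_gt with hneg | hpos
  · have : -y < x := (hf.lt_iff_lt hy' hx).1 (by nlinarith)
    nlinarith
  · have : x < -y := (hf.lt_iff_lt hx hy').1 (by nlinarith)
    nlinarith

/-- If `β₂ ≠ 0` and `F₁(β₁) + F₁(β₂) = −πβ₂/√(1+β₂²)`, then `β₁² > β₂²`. -/
theorem beta_sq_comparison (a β₁ β₂ : ℝ) (ha : a ∈ Set.Ioo (0:ℝ) 1)
    (hβ₁ : β₁ ∈ Set.Icc (-(a / Real.sqrt (1 - a^2))) (a / Real.sqrt (1 - a^2)))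
    (hβ₂ : β₂ ∈ Set.Icc (-(a / Real.sqrt (1 - a^2))) (a / Real.sqrt (1 - a^2)))
    (hne : β₂ ≠ 0)
    (hsum : F₁ a β₁ + F₁ a β₂ = -(Real.pi * β₂ / Real.sqrt (1 + β₂^2))) :
    β₁^2 > β₂^2 := by
  refine sq_lt_sq_of_strictMonoOn_of_eq_sub_mul (strictMonoOn_F₁ ha.1 ha.2) hβ₁ hβ₂
    (k := π / √(1 + β₂ ^ 2)) (by positivity) hne ?_
  rw [F₁_neg]
  linear_combination hsum
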